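/- arXiv:2009.10678 — 7 statements merged into one kernel-verified Lean document; each statement's English description precedes it below -/
import Mathlib

section
/- Let A be a real symmetric positive definite n×n matrix and R > 0. Then the quantum polar dual of the ellipsoid {x ∈ ℝⁿ : ⟨Ax, x⟩ ≤ R²} is the ellipsoid {p ∈ ℝⁿ : ⟨A⁻¹p, p⟩ ≤ (ħ/R)²}. In particular, {x : ⟨Ax,x⟩ ≤ ħ}^ħ = {p : ⟨A⁻¹p,p⟩ ≤ ħ}. -/
/-!
The support function of the ellipsoid `{x : ⟨Ax, x⟩ ≤ c}` at `p` is `√(c ⟨A⁻¹p, p⟩)`: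
Cauchy–Schwarz for the form `⟨A·, ·⟩`, applied to `x` and `A⁻¹p`, bounds `⟨p, x⟩` by it, and
a suitable multiple of `A⁻¹p` attains it. Hence `p` lies in the `ħ`-polar of the ellipsoid iff
`√(c ⟨A⁻¹p, p⟩) ≤ ħ`, that is, iff `⟨A⁻¹p, p⟩ ≤ ħ² / c`.
-/

open Matrix

variable {ι : Type*} [Fintype ι]

def quantumPolar (hbar : ℝ) (X : Set (ι → ℝ)) : Set (ι → ℝ) :=
  {p | ∀ x ∈ X, p ⬝ᵥ x ≤ hbar}

namespace Matrix

def ellipsoid (A : Matrix ι ι ℝ) (c : ℝ) : Set (ι → ℝ) :=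
  {x | A *ᵥ x ⬝ᵥ x ≤ c}

variable [DecidableEq ι]

theorem PosSemidef.dotProduct_mulVec_sq_le {A : Matrix ι ι ℝ} (hA : A.PosSemidef)
    (x y : ι → ℝ) : (x ⬝ᵥ A *ᵥ y) ^ 2 ≤ (x ⬝ᵥ A *ᵥ x) * (y ⬝ᵥ A *ᵥ y) := by
  have hsymm := LinearMap.BilinForm.isSymm_iff.1 (isSymm_toBilin'_iff_isSymm.2 hA.isHermitian)
  simpa only [toBilin'_apply'] using A.toBilin'.apply_sq_le_of_symm
    (fun z ↦ by simpa [toBilin'_apply'] using hA.dotProduct_mulVec_nonneg z) hsymm x y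

theorem PosDef.isGreatest_dotProduct_ellipsoid {A : Matrix ι ι ℝ} (hA : A.PosDef) {c : ℝ}
    (hc : 0 ≤ c) (p : ι → ℝ) :
    IsGreatest ((p ⬝ᵥ ·) '' ellipsoid A c) √(c * (A⁻¹ *ᵥ p ⬝ᵥ p)) := by
  set u := A⁻¹ *ᵥ p
  have hAu : A *ᵥ u = p := by
    rw [mulVec_mulVec, mul_nonsing_inv A ((isUnit_iff_isUnit_det _).1 hA.isUnit), one_mulVec]
  have hq : 0 ≤ u ⬝ᵥ p := by
    simpa [dotProduct_comm] using hA.inv.posSemidef.dotProduct_mulVec_nonneg p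
  -- If `⟨u, p⟩ = 0` the witness is `0`, since `c / 0 = 0`.
  refine ⟨⟨√(c / (u ⬝ᵥ p)) • u, ?_, ?_⟩, ?_⟩
  · have : √(c / (u ⬝ᵥ p)) ^ 2 * (u ⬝ᵥ p) ≤ c := by
      rcases hq.eq_or_lt with hq0 | hq0
      · simp [← hq0, hc]
      · rw [Real.sq_sqrt (by positivity), div_mul_cancel₀ _ hq0.ne']
    simpa [ellipsoid, mulVec_smul, hAu, dotProduct_comm p u, sq, mul_assoc] using this
  · have : c * (u ⬝ᵥ p) = c / (u ⬝ᵥ p) * (u ⬝ᵥ p) ^ 2 := by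
      rcases hq.eq_or_lt with hq0 | hq0
      · simp [← hq0]
      · field_simp
    rw [this, Real.sqrt_mul' _ (sq_nonneg _), Real.sqrt_sq hq]
    simp only [dotProduct_smul, smul_eq_mul, dotProduct_comm p u]
  · rintro _ ⟨x, hx, rfl⟩
    refine (le_abs_self _).trans (Real.abs_le_sqrt ?_)
    have hcs := hA.posSemidef.dotProduct_mulVec_sq_le x u
    rw [hAu, dotProduct_comm x p, dotProduct_comm x (A *ᵥ x)] at hcs
    calc (p ⬝ᵥ x) ^ 2 ≤ (A *ᵥ x ⬝ᵥ x) * (u ⬝ᵥ p) := hcs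
      _ ≤ c * (u ⬝ᵥ p) := mul_le_mul_of_nonneg_right hx hq

theorem PosDef.quantumPolar_ellipsoid {A : Matrix ι ι ℝ} (hA : A.PosDef) {hbar c : ℝ}
    (hhbar : 0 ≤ hbar) (hc : 0 < c) :
    quantumPolar hbar (ellipsoid A c) = ellipsoid A⁻¹ (hbar ^ 2 / c) := by
  ext p
  have hsup := (hA.isGreatest_dotProduct_ellipsoid hc.le p).isLUB
  change (∀ x ∈ ellipsoid A c, p ⬝ᵥ x ≤ hbar) ↔ A⁻¹ *ᵥ p ⬝ᵥ p ≤ hbar ^ 2 / c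
  rw [le_div_iff₀ hc, mul_comm, ← Real.sqrt_le_left hhbar, isLUB_le_iff hsup, mem_upperBounds,
    Set.forall_mem_image]

end Matrix

/-- the quantum polar dual of the ellipsoid `{x : ⟨Ax,x⟩ ≤ R²}` (for a real
symmetric positive definite matrix `A`) is the ellipsoid `{p : ⟨A⁻¹p,p⟩ ≤ (ħ/R)²}`;
in particular `{x : ⟨Ax,x⟩ ≤ ħ}^ħ = {p : ⟨A⁻¹p,p⟩ ≤ ħ}`. -/
theorem statement1 (n : ℕ) (hbar : ℝ) (hhbar : 0 < hbar) (R : ℝ) (hR : 0 < R)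
    (A : Matrix (Fin n) (Fin n) ℝ) (hA : A.PosDef) :
    {p : Fin n → ℝ | ∀ x ∈ {x : Fin n → ℝ | A.mulVec x ⬝ᵥ x ≤ R ^ 2}, p ⬝ᵥ x ≤ hbar}
      = {p : Fin n → ℝ | A⁻¹.mulVec p ⬝ᵥ p ≤ (hbar / R) ^ 2} ∧
    {p : Fin n → ℝ | ∀ x ∈ {x : Fin n → ℝ | A.mulVec x ⬝ᵥ x ≤ hbar}, p ⬝ᵥ x ≤ hbar}
      = {p : Fin n → ℝ | A⁻¹.mulVec p ⬝ᵥ p ≤ hbar} := by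
  refine ⟨?_, ?_⟩
  · rw [div_pow]
    exact hA.quantumPolar_ellipsoid hhbar.le (pow_pos hR 2)
  · have h := hA.quantumPolar_ellipsoid hhbar.le hhbar
    rwa [sq, mul_div_cancel_right₀ _ hhbar.ne'] at h
end

section
/- Let A and B be real symmetric positive definite n×n matrices. Then all eigenvalues λ₁, …, λₙ of the product AB are real and positive, and there exists an invertible real n×n matrix L such that LᵀAL = L⁻¹B(Lᵀ)⁻¹ = Λ, where Λ = diag(√λ₁, …, √λₙ). -/
/-!
Write `A = S* S` with `S` invertible (e.g. `S = √A`). Then `S B S*` is positive definite, so a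
unitary `U` diagonalises it, `U* (S B S*) U = diag λ` with `λ > 0`, and `P = S⁻¹ U` satisfies
`P* A P = 1`, `P⁻¹ B P⁻* = diag λ`. The rescaled `L = P diag (λ^{1/4})` balances the two
congruences to `diag (√λ)`, and multiplying them gives `L* (AB) L*⁻¹ = diag λ`, hence the
spectrum of `AB`.
-/

open Matrix

theorem Units.star_mul_mul_mul_inv_mul_mul_star {R : Type*} [Monoid R] [StarMul R] (u : Rˣ)
    (a b : R) :
    (star (u : R) * a * u) * (↑u⁻¹ * b * star (↑u⁻¹ : R)) =
      star (u : R) * (a * b) * star (↑u⁻¹ : R) := by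
  simp only [mul_assoc, Units.mul_inv_cancel_left]

namespace Matrix

open scoped ComplexOrder

variable {𝕜 n : Type*} [RCLike 𝕜] [Fintype n] [DecidableEq n]

theorem spectrum_map_units_conj {R S : Type*} [CommRing R] [CommRing S] (f : R →+* S)
    (u : (Matrix n n R)ˣ) (M : Matrix n n R) :
    spectrum S (((u : Matrix n n R) * M * (u⁻¹ : (Matrix n n R)ˣ)).map f) =
      spectrum S (M.map f) := by
  simpa [Matrix.map_mul] using
    spectrum.units_conjugate (R := S) (u := Units.map f.mapMatrix.toMonoidHom u) (a := M.map f)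

open scoped MatrixOrder in
theorem PosDef.exists_units_eq_star_mul_self {A : Matrix n n 𝕜} (hA : A.PosDef) :
    ∃ s : (Matrix n n 𝕜)ˣ, A = star (s : Matrix n n 𝕜) * s := by
  have hs : IsUnit (CFC.sqrt A) :=
    CFC.isUnit_sqrt_iff_isStrictlyPositive.mpr hA.isStrictlyPositive
  refine ⟨hs.unit, ?_⟩
  rw [hs.unit_spec, (CFC.sqrt_nonneg A).isSelfAdjoint.star_eq, CFC.sqrt_mul_sqrt_self A]

theorem PosDef.exists_star_mul_mul_eq_one_and_eq_diagonal {A B : Matrix n n 𝕜}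
    (hA : A.PosDef) (hB : B.PosDef) :
    ∃ (P : (Matrix n n 𝕜)ˣ) (lam : n → ℝ), (∀ i, 0 < lam i) ∧
      star (P : Matrix n n 𝕜) * A * P = 1 ∧
      (↑P⁻¹ : Matrix n n 𝕜) * B * star (↑P⁻¹ : Matrix n n 𝕜) =
        diagonal (fun i => (lam i : 𝕜)) := by
  obtain ⟨s, rfl⟩ := hA.exists_units_eq_star_mul_self
  have hB' : ((s : Matrix n n 𝕜) * B * star (s : Matrix n n 𝕜)).PosDef :=
    (IsUnit.posDef_star_right_conjugate_iff s.isUnit).mpr hB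
  let U := hB'.1.eigenvectorUnitary
  refine ⟨s⁻¹ * Unitary.toUnits U, hB'.1.eigenvalues, hB'.eigenvalues_pos, ?_, ?_⟩
  · calc star (↑(s⁻¹ * Unitary.toUnits U) : Matrix n n 𝕜) * (star ↑s * ↑s) *
          ↑(s⁻¹ * Unitary.toUnits U)
        = star (U : Matrix n n 𝕜) * (star (↑s * ↑s⁻¹) * (↑s * ↑s⁻¹)) * U := by
          simp only [Units.val_mul, Unitary.val_toUnits_apply, star_mul, mul_assoc]
      _ = 1 := by simp
  · calc _ = (↑(star U) : Matrix n n 𝕜) * (↑s * B * star ↑s) * star ↑(star U) := by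
          simp only [_root_.mul_inv_rev, inv_inv, ← map_inv, Unitary.star_eq_inv, Units.val_mul,
            Unitary.val_toUnits_apply, star_mul, mul_assoc]
      _ = _ := by
          have h := hB'.1.conjStarAlgAut_star_eigenvectorUnitary
          rwa [Unitary.conjStarAlgAut_apply] at h

theorem PosDef.exists_star_mul_mul_eq_diagonal_sqrt_and_eq_diagonal_sqrt {A B : Matrix n n 𝕜}
    (hA : A.PosDef) (hB : B.PosDef) :
    ∃ (L : (Matrix n n 𝕜)ˣ) (lam : n → ℝ), (∀ i, 0 < lam i) ∧
      star (L : Matrix n n 𝕜) * A * L = diagonal (fun i => (√(lam i) : 𝕜)) ∧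
      (↑L⁻¹ : Matrix n n 𝕜) * B * star (↑L⁻¹ : Matrix n n 𝕜) =
        diagonal (fun i => (√(lam i) : 𝕜)) := by
  obtain ⟨P, lam, hlam, hPA, hPB⟩ := hA.exists_star_mul_mul_eq_one_and_eq_diagonal hB
  have hroot (i : n) : (√√(lam i) : 𝕜) ≠ 0 := by
    exact_mod_cast (Real.sqrt_pos.2 (Real.sqrt_pos.2 (hlam i))).ne'
  let E : (Matrix n n 𝕜)ˣ :=
    ⟨diagonal fun i => (√√(lam i) : 𝕜), diagonal fun i => (√√(lam i) : 𝕜)⁻¹,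
      by simp [hroot], by simp [hroot]⟩
  refine ⟨P * E, lam, hlam, ?_, ?_⟩
  · calc star (↑(P * E) : Matrix n n 𝕜) * A * ↑(P * E)
        = star (E : Matrix n n 𝕜) * (star ↑P * A * ↑P) * E := by
          simp only [Units.val_mul, star_mul, mul_assoc]
      _ = _ := by
          rw [hPA, mul_one]
          simp only [star_eq_conjTranspose, diagonal_conjTranspose,
            diagonal_mul_diagonal, Pi.star_apply, RCLike.star_def, RCLike.conj_ofReal,
            diagonal_eq_diagonal_iff, E]
          intro i
          exact_mod_cast Real.mul_self_sqrt (Real.sqrt_nonneg (lam i))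
  · calc (↑(P * E)⁻¹ : Matrix n n 𝕜) * B * star (↑(P * E)⁻¹ : Matrix n n 𝕜)
        = (↑E⁻¹ : Matrix n n 𝕜) * (↑P⁻¹ * B * star (↑P⁻¹ : Matrix n n 𝕜)) * star ↑E⁻¹ := by
          simp only [_root_.mul_inv_rev, Units.val_mul, star_mul, mul_assoc]
      _ = _ := by
          rw [hPB]
          simp only [Units.inv_mk, diagonal_mul_diagonal, star_eq_conjTranspose,
            diagonal_conjTranspose, Pi.star_apply, star_inv₀, RCLike.star_def, RCLike.conj_ofReal,
            diagonal_eq_diagonal_iff, E]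
          intro i
          have : (√√(lam i))⁻¹ * lam i * (√√(lam i))⁻¹ = √(lam i) := by
            rw [mul_comm, ← mul_assoc, ← mul_inv, Real.mul_self_sqrt (Real.sqrt_nonneg _),
              inv_mul_eq_div, Real.div_sqrt]
          exact_mod_cast this

end Matrix

/-- for real symmetric positive definite `A`, `B`, all (complex) eigenvalues of
`AB` are real and positive, and there is an invertible real matrix `L` with
`Lᵀ A L = L⁻¹ B (Lᵀ)⁻¹ = Λ = diag(√λ₁, …, √λₙ)`, the `λⱼ` being the eigenvalues of `AB`. -/
theorem statement3 (n : ℕ) (A B : Matrix (Fin n) (Fin n) ℝ)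
    (hA : A.PosDef) (hB : B.PosDef) :
    ∃ lam : Fin n → ℝ, (∀ i, 0 < lam i) ∧
      spectrum ℂ ((A * B).map (Complex.ofReal)) = Set.range (fun i => (lam i : ℂ)) ∧
      ∃ L : Matrix (Fin n) (Fin n) ℝ, IsUnit L.det ∧
        Lᵀ * A * L = Matrix.diagonal (fun i => Real.sqrt (lam i)) ∧
        L⁻¹ * B * (Lᵀ)⁻¹ = Matrix.diagonal (fun i => Real.sqrt (lam i)) := by
  obtain ⟨L, lam, hlam, hLA, hLB⟩ :=
    hA.exists_star_mul_mul_eq_diagonal_sqrt_and_eq_diagonal_sqrt hB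
  have htranspose (M : Matrix (Fin n) (Fin n) ℝ) : Mᵀ = star M :=
    (conjTranspose_eq_transpose_of_trivial M).symm
  refine ⟨lam, hlam, ?_, L, (isUnit_iff_isUnit_det _).mp L.isUnit, by rwa [htranspose], ?_⟩
  · have hAB : star (L : Matrix (Fin n) (Fin n) ℝ) * (A * B) *
        star (↑L⁻¹ : Matrix (Fin n) (Fin n) ℝ) = diagonal lam := by
      rw [← Units.star_mul_mul_mul_inv_mul_mul_star, hLA, hLB, diagonal_mul_diagonal]
      exact congrArg diagonal (funext fun i => Real.mul_self_sqrt (hlam i).le)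
    calc spectrum ℂ ((A * B).map Complex.ofReal)
        = spectrum ℂ ((star (L : Matrix (Fin n) (Fin n) ℝ) * (A * B) *
            star (↑L⁻¹ : Matrix (Fin n) (Fin n) ℝ)).map Complex.ofReal) :=
          (spectrum_map_units_conj Complex.ofRealHom (star L) (A * B)).symm
      _ = _ := by rw [hAB, diagonal_map Complex.ofReal_zero, spectrum_diagonal]
  · rw [← transpose_nonsing_inv, ← coe_units_inv, htranspose]
    exact hLB
end

section
/- Let Σ be a real symmetric positive definite 2n×2n matrix satisfying the quantum condition Σ + (iħ/2)J ⪰ 0, and let Ω = {z ∈ ℝ²ⁿ : ⟨Σ⁻¹z, z⟩ ≤ 2} be the associated covariance ellipsoid. Let Ω_X ⊆ ℝⁿ be the image of Ω under (x,p) ↦ x and Ω_P ⊆ ℝⁿ its image under (x,p) ↦ p. Then (Ω_X, Ω_P) is a quantum dual pair: Ω_X^ħ ⊆ Ω_P. -/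
/-!
Write `Σ = [[A, B], [Bᵀ, C]]`. Since `Σ *ᵥ y ∈ Ω` iff `⟨Σy, y⟩ ≤ 2`, the points `Σ(tp, 0)` show
that every `p ∈ Ω_X^ħ` satisfies `⟨Ap, p⟩ ≤ ħ²/2`, and the point `Σ(0, C⁻¹p)` shows that
`⟨C⁻¹p, p⟩ ≤ 2` puts `p` in `Ω_P`. Testing the quantum condition on `(u, iv)` kills the
`B`-terms and gives `ħ⟨u, v⟩ ≤ ⟨Au, u⟩ + ⟨Cv, v⟩`; with `u = p`, `v = (ħ/2)C⁻¹p` this is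
`(ħ²/4)⟨C⁻¹p, p⟩ ≤ ⟨Ap, p⟩ ≤ ħ²/2`.
-/

open Matrix ComplexOrder

/-- The standard symplectic matrix `J = [[0, Iₙ],[−Iₙ, 0]]`, with phase space `ℝ²ⁿ`
indexed by `Fin n ⊕ Fin n` (first summand: positions `x`, second summand: momenta `p`). -/
def Jmat (n : ℕ) : Matrix (Fin n ⊕ Fin n) (Fin n ⊕ Fin n) ℝ :=
  Matrix.fromBlocks 0 1 (-1) 0

section
variable {ι : Type*} [Fintype ι]

lemma re_star_dotProduct_map_ofReal_mulVec (M : Matrix ι ι ℝ) (x y : ι → ℝ) :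
    (star (fun i => (x i : ℂ) + Complex.I * y i) ⬝ᵥ
      (M.map Complex.ofReal *ᵥ fun i => (x i : ℂ) + Complex.I * y i)).re
      = x ⬝ᵥ M *ᵥ x + y ⬝ᵥ M *ᵥ y := by
  simp [dotProduct, mulVec, Complex.re_sum, Finset.mul_sum, ← Finset.sum_add_distrib]

lemma im_star_dotProduct_map_ofReal_mulVec (M : Matrix ι ι ℝ) (x y : ι → ℝ) :
    (star (fun i => (x i : ℂ) + Complex.I * y i) ⬝ᵥ
      (M.map Complex.ofReal *ᵥ fun i => (x i : ℂ) + Complex.I * y i)).im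
      = x ⬝ᵥ M *ᵥ y - y ⬝ᵥ M *ᵥ x := by
  simp [dotProduct, mulVec, Complex.im_sum, Finset.mul_sum, ← Finset.sum_sub_distrib]
  refine Finset.sum_congr rfl fun i _ => Finset.sum_congr rfl fun j _ => ?_
  ring

lemma re_star_dotProduct_add_I_smul_mulVec (M K : Matrix ι ι ℝ) (c : ℝ) (x y : ι → ℝ) :
    (star (fun i => (x i : ℂ) + Complex.I * y i) ⬝ᵥ
      ((M.map Complex.ofReal + (Complex.I * c) • K.map Complex.ofReal) *ᵥ
        fun i => (x i : ℂ) + Complex.I * y i)).re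
      = x ⬝ᵥ M *ᵥ x + y ⬝ᵥ M *ᵥ y - c * (x ⬝ᵥ K *ᵥ y - y ⬝ᵥ K *ᵥ x) := by
  rw [add_mulVec, smul_mulVec, dotProduct_add, dotProduct_smul, Complex.add_re, smul_eq_mul,
    mul_assoc, Complex.I_mul_re, Complex.im_ofReal_mul, im_star_dotProduct_map_ofReal_mulVec,
    re_star_dotProduct_map_ofReal_mulVec]
  ring
end

section
variable {R : Type*} [NonUnitalNonAssocSemiring R] {m n : Type*} [Fintype m] [Fintype n]

lemma sumElim_zero_dotProduct (u : m → R) (z : m ⊕ n → R) :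
    Sum.elim u 0 ⬝ᵥ z = u ⬝ᵥ (z ∘ Sum.inl) := by
  simp [dotProduct, Fintype.sum_sum_type]

lemma zero_sumElim_dotProduct (v : n → R) (z : m ⊕ n → R) :
    Sum.elim 0 v ⬝ᵥ z = v ⬝ᵥ (z ∘ Sum.inr) := by
  simp [dotProduct, Fintype.sum_sum_type]

lemma mulVec_sumElim_zero_comp_inl (M : Matrix (m ⊕ n) (m ⊕ n) R) (u : m → R) :
    (M *ᵥ Sum.elim u 0) ∘ Sum.inl = M.submatrix Sum.inl Sum.inl *ᵥ u := by
  ext i; simp [mulVec, dotProduct, Fintype.sum_sum_type]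

lemma mulVec_zero_sumElim_comp_inr (M : Matrix (m ⊕ n) (m ⊕ n) R) (v : n → R) :
    (M *ᵥ Sum.elim 0 v) ∘ Sum.inr = M.submatrix Sum.inr Sum.inr *ᵥ v := by
  ext i; simp [mulVec, dotProduct, Fintype.sum_sum_type]
end

lemma Jmat_mulVec (n : ℕ) (z : Fin n ⊕ Fin n → ℝ) :
    Jmat n *ᵥ z = Sum.elim (z ∘ Sum.inr) (-(z ∘ Sum.inl)) := by
  rw [Jmat, ← Sum.elim_comp_inl_inr z, fromBlocks_mulVec]
  simp [neg_mulVec]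

lemma hbar_mul_dotProduct_le_of_quantum {n : ℕ} {hbar : ℝ}
    {Cov : Matrix (Fin n ⊕ Fin n) (Fin n ⊕ Fin n) ℝ}
    (hquant : (Cov.map Complex.ofReal
        + (Complex.I * (hbar / 2)) • (Jmat n).map Complex.ofReal).PosSemidef)
    (u v : Fin n → ℝ) :
    hbar * (u ⬝ᵥ v) ≤ u ⬝ᵥ Cov.submatrix Sum.inl Sum.inl *ᵥ u
      + v ⬝ᵥ Cov.submatrix Sum.inr Sum.inr *ᵥ v := by
  set x : Fin n ⊕ Fin n → ℝ := Sum.elim u 0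
  set y : Fin n ⊕ Fin n → ℝ := Sum.elim 0 v
  have h := (Complex.le_def.mp
    (hquant.dotProduct_mulVec_nonneg fun i => (x i : ℂ) + Complex.I * y i)).1
  rw [Complex.zero_re, show (hbar : ℂ) / 2 = ((hbar / 2 : ℝ) : ℂ) by push_cast; rfl,
    re_star_dotProduct_add_I_smul_mulVec] at h
  simp only [x, y, sumElim_zero_dotProduct, zero_sumElim_dotProduct,
    mulVec_sumElim_zero_comp_inl, mulVec_zero_sumElim_comp_inr, Jmat_mulVec, Sum.elim_comp_inl,
    Sum.elim_comp_inr, dotProduct_neg, dotProduct_comm v u] at h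
  linarith

lemma le_sq_div_two_of_forall_sq_mul_le {a h : ℝ} (ha : 0 ≤ a)
    (H : ∀ t : ℝ, t ^ 2 * a ≤ 2 → t * a ≤ h) : a ≤ h ^ 2 / 2 := by
  rcases ha.eq_or_lt with rfl | ha
  · positivity
  set t := √(2 / a)
  have ht : t ^ 2 * a = 2 := by rw [Real.sq_sqrt (by positivity), div_mul_cancel₀ _ ha.ne']
  have hta : 0 ≤ t * a := by positivity
  nlinarith [H t ht.le]

def covEllipsoid {ι : Type*} [Fintype ι] [DecidableEq ι] (S : Matrix ι ι ℝ) : Set (ι → ℝ) :=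
  {z | S⁻¹ *ᵥ z ⬝ᵥ z ≤ 2}

lemma mulVec_mem_covEllipsoid_iff {ι : Type*} [Fintype ι] [DecidableEq ι] {S : Matrix ι ι ℝ}
    (hS : IsUnit S.det) (y : ι → ℝ) : S *ᵥ y ∈ covEllipsoid S ↔ y ⬝ᵥ S *ᵥ y ≤ 2 := by
  rw [covEllipsoid, Set.mem_ofPred_eq, mulVec_mulVec, nonsing_inv_mul _ hS, one_mulVec]

section
variable {m n : Type*} [Fintype m] [Fintype n] [DecidableEq m] [DecidableEq n]
  {S : Matrix (m ⊕ n) (m ⊕ n) ℝ}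

lemma dotProduct_submatrix_inl_le_of_mem_polar (hS : S.PosDef) {h : ℝ} {p : m → ℝ}
    (hp : ∀ x ∈ (· ∘ Sum.inl) '' covEllipsoid S, p ⬝ᵥ x ≤ h) :
    p ⬝ᵥ S.submatrix Sum.inl Sum.inl *ᵥ p ≤ h ^ 2 / 2 := by
  refine le_sq_div_two_of_forall_sq_mul_le
    ((hS.submatrix Sum.inl_injective).posSemidef.dotProduct_mulVec_nonneg p) fun t ht => ?_
  have hmem : S *ᵥ Sum.elim (t • p) 0 ∈ covEllipsoid S := by
    rw [mulVec_mem_covEllipsoid_iff hS.det_pos.ne'.isUnit, sumElim_zero_dotProduct,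
      mulVec_sumElim_zero_comp_inl, mulVec_smul, smul_dotProduct, dotProduct_smul]
    simpa [smul_eq_mul, ← mul_assoc, sq] using ht
  simpa [mulVec_sumElim_zero_comp_inl, mulVec_smul, dotProduct_smul] using hp _ ⟨_, hmem, rfl⟩

lemma mem_image_comp_inr_covEllipsoid (hS : S.PosDef) {p : n → ℝ}
    (hp : p ⬝ᵥ (S.submatrix Sum.inr Sum.inr)⁻¹ *ᵥ p ≤ 2) :
    p ∈ (· ∘ Sum.inr) '' covEllipsoid S := by
  have hC : IsUnit (S.submatrix Sum.inr Sum.inr).det :=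
    (hS.submatrix Sum.inr_injective).det_pos.ne'.isUnit
  refine ⟨S *ᵥ Sum.elim 0 ((S.submatrix Sum.inr Sum.inr)⁻¹ *ᵥ p), ?_, ?_⟩
  · rw [mulVec_mem_covEllipsoid_iff hS.det_pos.ne'.isUnit, zero_sumElim_dotProduct,
      mulVec_zero_sumElim_comp_inr, mulVec_mulVec, mul_nonsing_inv _ hC, one_mulVec,
      dotProduct_comm]
    exact hp
  · change (S *ᵥ _) ∘ Sum.inr = p
    rw [mulVec_zero_sumElim_comp_inr, mulVec_mulVec, mul_nonsing_inv _ hC, one_mulVec]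
end

lemma sq_div_four_mul_dotProduct_inv_le_of_quantum {n : ℕ} {hbar : ℝ}
    {Cov : Matrix (Fin n ⊕ Fin n) (Fin n ⊕ Fin n) ℝ} (hCov : Cov.PosDef)
    (hquant : (Cov.map Complex.ofReal
        + (Complex.I * (hbar / 2)) • (Jmat n).map Complex.ofReal).PosSemidef)
    (p : Fin n → ℝ) :
    hbar ^ 2 / 4 * (p ⬝ᵥ (Cov.submatrix Sum.inr Sum.inr)⁻¹ *ᵥ p)
      ≤ p ⬝ᵥ Cov.submatrix Sum.inl Sum.inl *ᵥ p := by
  set q := (Cov.submatrix Sum.inr Sum.inr)⁻¹ *ᵥ p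
  have hCq : Cov.submatrix Sum.inr Sum.inr *ᵥ q = p := by
    rw [mulVec_mulVec, mul_nonsing_inv _ (hCov.submatrix Sum.inr_injective).det_pos.ne'.isUnit,
      one_mulVec]
  have h := hbar_mul_dotProduct_le_of_quantum hquant p ((hbar / 2) • q)
  simp only [mulVec_smul, hCq, dotProduct_smul, smul_dotProduct, smul_eq_mul,
    dotProduct_comm q p] at h
  linarith

/-- if the real symmetric positive definite covariance matrix `Σ` satisfies
the quantum condition `Σ + (iħ/2)J ⪰ 0`, then the orthogonal projections `Ω_X`, `Ω_P`
of the covariance ellipsoid `Ω = {z : ⟨Σ⁻¹z,z⟩ ≤ 2}` on the `x`- and `p`-spaces form a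
quantum dual pair: `Ω_X^ħ ⊆ Ω_P`. -/
theorem statement5 (n : ℕ) (hbar : ℝ) (hhbar : 0 < hbar)
    (Cov : Matrix (Fin n ⊕ Fin n) (Fin n ⊕ Fin n) ℝ) (hCov : Cov.PosDef)
    (hquant : (Cov.map Complex.ofReal
        + (Complex.I * (hbar / 2)) • (Jmat n).map Complex.ofReal).PosSemidef) :
    {p : Fin n → ℝ | ∀ x ∈ (fun z : (Fin n ⊕ Fin n) → ℝ => z ∘ Sum.inl) ''
        {z : (Fin n ⊕ Fin n) → ℝ | Cov⁻¹.mulVec z ⬝ᵥ z ≤ 2}, p ⬝ᵥ x ≤ hbar}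
      ⊆ (fun z : (Fin n ⊕ Fin n) → ℝ => z ∘ Sum.inr) ''
        {z : (Fin n ⊕ Fin n) → ℝ | Cov⁻¹.mulVec z ⬝ᵥ z ≤ 2} := by
  intro p hp
  have hA := dotProduct_submatrix_inl_le_of_mem_polar hCov hp
  have hAC := sq_div_four_mul_dotProduct_inv_le_of_quantum hCov hquant p
  refine mem_image_comp_inr_covEllipsoid hCov ?_
  have : hbar ^ 2 / 4 * (p ⬝ᵥ (Cov.submatrix Sum.inr Sum.inr)⁻¹ *ᵥ p) ≤ hbar ^ 2 / 4 * 2 := by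
    linarith
  exact le_of_mul_le_mul_left this (by positivity)
end

section
/- Let S be a real symplectic 2n×2n matrix and r > 0. If the image S(B²ⁿ(r)) of the closed Euclidean ball B²ⁿ(r) ⊂ ℝ²ⁿ of radius r centered at 0 is contained in the product B^n(r) × B^n(r) ⊂ ℝⁿ × ℝⁿ of the closed Euclidean balls of radius r centered at 0, then S(B²ⁿ(r)) = B²ⁿ(r). -/
open Matrix

/-!
Testing `S` on the vector of the ball pointing along its `i`-th row shows that the row has length
at most `1`, so `tr (Sᵀ S) ≤ 2n`. For a symplectic `S` the inverse transpose is `S⁻ᵀ = -J S J`,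
and expanding the Frobenius norm gives `‖S - S⁻ᵀ‖² = 2 tr (Sᵀ S) - 4n ≥ 0`. Hence `tr (Sᵀ S) = 2n`
and `S = S⁻ᵀ`: the matrix `S` is orthogonal, so it maps the ball onto itself.
-/

namespace Matrix

variable {m n : Type*} [Fintype n]

theorem sq_apply_le_dotProduct_self {R : Type*} [Ring R] [LinearOrder R] [IsStrictOrderedRing R]
    (v : n → R) (i : n) : v i ^ 2 ≤ v ⬝ᵥ v := by
  simpa [dotProduct, sq] using
    Finset.single_le_sum (f := fun j => v j * v j) (fun j _ => mul_self_nonneg (v j))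
      (Finset.mem_univ i)

theorem trace_mul_transpose_self {R : Type*} [NonUnitalNonAssocSemiring R] [Fintype m]
    (A : Matrix m n R) :
    (A * Aᵀ).trace = ∑ i, A i ⬝ᵥ A i :=
  rfl

theorem trace_transpose_mul_self_nonneg [Fintype m] (A : Matrix m n ℝ) :
    0 ≤ (Aᵀ * A).trace := by
  simpa [conjTranspose_eq_transpose_of_trivial] using
    (posSemidef_conjTranspose_mul_self A).trace_nonneg

theorem trace_transpose_mul_self_eq_zero_iff [Fintype m] {A : Matrix m n ℝ} :
    (Aᵀ * A).trace = 0 ↔ A = 0 := by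
  simpa [conjTranspose_eq_transpose_of_trivial] using
    trace_conjTranspose_mul_self_eq_zero_iff (A := A)

theorem dotProduct_self_le_one_of_forall_mulVec_sq_le {r : ℝ} (hr : 0 < r) (A : Matrix m n ℝ)
    (i : m) (h : ∀ z, z ⬝ᵥ z ≤ r ^ 2 → (A *ᵥ z) i ^ 2 ≤ r ^ 2) : A i ⬝ᵥ A i ≤ 1 := by
  set p := A i ⬝ᵥ A i
  have hp0 : 0 ≤ p := Finset.sum_nonneg fun j _ => mul_self_nonneg _
  rcases hp0.eq_or_lt with hp | hp
  · rw [← hp]; exact zero_le_one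
  set c := r / √p
  have hc : c ^ 2 * p = r ^ 2 := by
    rw [div_pow, Real.sq_sqrt hp.le]; field_simp
  have hz : (c • A i) ⬝ᵥ (c • A i) = r ^ 2 := by
    rw [smul_dotProduct, dotProduct_smul, smul_eq_mul, smul_eq_mul, ← mul_assoc, ← sq, hc]
  have hAz : (A *ᵥ (c • A i)) i = c * p := by
    rw [mulVec_smul, Pi.smul_apply, smul_eq_mul]; rfl
  have key : r ^ 2 * p ≤ r ^ 2 :=
    calc r ^ 2 * p = (c * p) ^ 2 := by rw [← hc]; ring
      _ ≤ r ^ 2 := hAz ▸ h _ hz.le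
  exact (mul_le_iff_le_one_right (pow_pos hr 2)).mp key

theorem mulVec_image_setOf_dotProduct_self_le [DecidableEq n] {A : Matrix n n ℝ}
    (hA : Aᵀ * A = 1) (c : ℝ) :
    A.mulVec '' {z | z ⬝ᵥ z ≤ c} = {z | z ⬝ᵥ z ≤ c} := by
  have hdot (z : n → ℝ) : A *ᵥ z ⬝ᵥ A *ᵥ z = z ⬝ᵥ z := by
    rw [dotProduct_mulVec, ← mulVec_transpose, mulVec_mulVec, hA, one_mulVec, dotProduct_comm]
  have hA' : A * Aᵀ = 1 := mul_eq_one_comm.mp hA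
  ext z
  constructor
  · rintro ⟨w, hw, rfl⟩
    rwa [Set.mem_ofPred_eq, hdot]
  · intro hz
    refine ⟨Aᵀ *ᵥ z, ?_, by rw [mulVec_mulVec, hA', one_mulVec]⟩
    rwa [Set.mem_ofPred_eq, ← hdot, mulVec_mulVec, hA', one_mulVec]

end Matrix

namespace SymplecticGroup

variable {l R : Type*} [DecidableEq l] [Fintype l] [CommRing R]

theorem trace_J_mul_mul_J (X : Matrix (l ⊕ l) (l ⊕ l) R) :
    (J l R * X * J l R).trace = -X.trace := by
  rw [trace_mul_cycle, J_squared, Matrix.neg_mul, Matrix.one_mul, trace_neg]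

theorem transpose_mul_self_add_J_mul_mul_J {A : Matrix (l ⊕ l) (l ⊕ l) R}
    (hA : A ∈ symplecticGroup l R) :
    (A + J l R * A * J l R)ᵀ * (A + J l R * A * J l R)
      = Aᵀ * A - 2 - J l R * (Aᵀ * A) * J l R := by
  calc (A + J l R * A * J l R)ᵀ * (A + J l R * A * J l R)
      = Aᵀ * A + (Aᵀ * J l R * A) * J l R + J l R * (Aᵀ * J l R * A)
          + J l R * Aᵀ * (J l R * J l R) * A * J l R := by
        simp only [transpose_add, transpose_mul, J_transpose]; noncomm_ring
    _ = Aᵀ * A - 2 - J l R * (Aᵀ * A) * J l R := by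
        rw [mem_iff'.mp hA, J_squared, ← one_add_one_eq_two]; noncomm_ring

theorem trace_transpose_mul_self_add_J_mul_mul_J {A : Matrix (l ⊕ l) (l ⊕ l) R}
    (hA : A ∈ symplecticGroup l R) :
    ((A + J l R * A * J l R)ᵀ * (A + J l R * A * J l R)).trace
      = 2 * (Aᵀ * A).trace - 2 * Fintype.card (l ⊕ l) := by
  have htwo : (2 : Matrix (l ⊕ l) (l ⊕ l) R).trace = 2 * Fintype.card (l ⊕ l) := by
    rw [← one_add_one_eq_two, trace_add, trace_one]; ring
  rw [transpose_mul_self_add_J_mul_mul_J hA, trace_sub, trace_sub, trace_J_mul_mul_J, htwo]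
  ring

theorem card_le_trace_transpose_mul_self {A : Matrix (l ⊕ l) (l ⊕ l) ℝ}
    (hA : A ∈ symplecticGroup l ℝ) : (Fintype.card (l ⊕ l) : ℝ) ≤ (Aᵀ * A).trace := by
  have := trace_transpose_mul_self_nonneg (A + J l ℝ * A * J l ℝ)
  rw [trace_transpose_mul_self_add_J_mul_mul_J hA] at this
  linarith

theorem transpose_mul_self_eq_one_of_trace_le {A : Matrix (l ⊕ l) (l ⊕ l) ℝ}
    (hA : A ∈ symplecticGroup l ℝ) (h : (Aᵀ * A).trace ≤ Fintype.card (l ⊕ l)) :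
    Aᵀ * A = 1 := by
  have hA_eq : A = -(J l ℝ * A * J l ℝ) := by
    refine eq_neg_of_add_eq_zero_left (trace_transpose_mul_self_eq_zero_iff.mp ?_)
    rw [trace_transpose_mul_self_add_J_mul_mul_J hA]
    linarith [card_le_trace_transpose_mul_self hA]
  calc Aᵀ * A = Aᵀ * -(J l ℝ * A * J l ℝ) := congrArg (Aᵀ * ·) hA_eq
    _ = -(Aᵀ * J l ℝ * A * J l ℝ) := by noncomm_ring
    _ = 1 := by rw [mem_iff'.mp hA, J_squared, neg_neg]

end SymplecticGroup

theorem Jmat_eq_neg_J (n : ℕ) : Jmat n = -J (Fin n) ℝ := by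
  rw [Jmat, J, fromBlocks_neg, neg_zero, neg_neg]

/-- if a symplectic matrix `S` maps the closed Euclidean ball `B²ⁿ(r)` of radius
`r > 0` (described by `z ⬝ᵥ z ≤ r²`) into the product `Bⁿ(r) × Bⁿ(r)` of the closed Euclidean
balls of radius `r` in the two factors of `ℝ²ⁿ = ℝⁿ × ℝⁿ`, then `S(B²ⁿ(r)) = B²ⁿ(r)`. -/
theorem statement9 (n : ℕ) (r : ℝ) (hr : 0 < r)
    (S : Matrix (Fin n ⊕ Fin n) (Fin n ⊕ Fin n) ℝ)
    (hS : Sᵀ * Jmat n * S = Jmat n)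
    (hsub : ∀ z : (Fin n ⊕ Fin n) → ℝ, z ⬝ᵥ z ≤ r ^ 2 →
      (S.mulVec z ∘ Sum.inl) ⬝ᵥ (S.mulVec z ∘ Sum.inl) ≤ r ^ 2 ∧
      (S.mulVec z ∘ Sum.inr) ⬝ᵥ (S.mulVec z ∘ Sum.inr) ≤ r ^ 2) :
    S.mulVec '' {z : (Fin n ⊕ Fin n) → ℝ | z ⬝ᵥ z ≤ r ^ 2}
      = {z : (Fin n ⊕ Fin n) → ℝ | z ⬝ᵥ z ≤ r ^ 2} := by
  have hSymp : S ∈ symplecticGroup (Fin n) ℝ := by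
    rw [SymplecticGroup.mem_iff']
    simpa [Jmat_eq_neg_J] using hS
  have hcoord : ∀ i z, z ⬝ᵥ z ≤ r ^ 2 → (S *ᵥ z) i ^ 2 ≤ r ^ 2 := by
    rintro (i | i) z hz
    · exact (sq_apply_le_dotProduct_self _ i).trans (hsub z hz).1
    · exact (sq_apply_le_dotProduct_self _ i).trans (hsub z hz).2
  have htrace : (Sᵀ * S).trace ≤ Fintype.card (Fin n ⊕ Fin n) := by
    calc (Sᵀ * S).trace = ∑ i, S i ⬝ᵥ S i := by rw [trace_mul_comm, trace_mul_transpose_self]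
      _ ≤ ∑ _i, (1 : ℝ) := Finset.sum_le_sum fun i _ ↦
          dotProduct_self_le_one_of_forall_mulVec_sq_le hr S i (hcoord i)
      _ = Fintype.card (Fin n ⊕ Fin n) := by simp
  exact mulVec_image_setOf_dotProduct_self_le
    (SymplecticGroup.transpose_mul_self_eq_one_of_trace_le hSymp htrace) _
end

section
/- Let A be a real symmetric positive definite n×n matrix, X = {x ∈ ℝⁿ : ⟨Ax,x⟩ ≤ ħ}, and X^ħ = {p ∈ ℝⁿ : ⟨A⁻¹p,p⟩ ≤ ħ} its quantum polar dual. Then the product X × X^ħ ⊂ ℝ²ⁿ contains exactly one quantum blob, namely the ellipsoid Ω_A = {(x,p) : ⟨Ax,x⟩ + ⟨A⁻¹p,p⟩ ≤ ħ}: Ω_A = S_A(B²ⁿ(√ħ)) for the symplectic matrix S_A = [[A^{−1/2}, 0],[0, A^{1/2}]], Ω_A ⊆ X × X^ħ, and for every symplectic 2n×2n matrix S with S(B²ⁿ(√ħ)) ⊆ X × X^ħ one has S(B²ⁿ(√ħ)) = Ω_A. Moreover, the orthogonal projections of Ω_A onto the two factors ℝⁿ are exactly X and X^ħ. -/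
open Matrix

/-- `S` is a (linear) symplectic transformation. -/
def IsSymplectic {n : ℕ} (S : Matrix (Fin n ⊕ Fin n) (Fin n ⊕ Fin n) ℝ) : Prop :=
  Sᵀ * Jmat n * S = Jmat n

/-- The closed ball `B²ⁿ(√ħ) = {z : z ⬝ᵥ z ≤ ħ}` in phase space `ℝ²ⁿ ≅ ℝⁿ × ℝⁿ`
(indexed by `Fin n ⊕ Fin n`). -/
def ballh (n : ℕ) (hbar : ℝ) : Set ((Fin n ⊕ Fin n) → ℝ) :=
  {z | z ⬝ᵥ z ≤ hbar}

/-- The product `X × X^ħ ⊂ ℝ²ⁿ` of the ellipsoid `X = {x : ⟨Ax,x⟩ ≤ ħ}` with its quantum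
polar dual `X^ħ = {p : ⟨A⁻¹p,p⟩ ≤ ħ}`. -/
def prodXXh (n : ℕ) (hbar : ℝ) (A : Matrix (Fin n) (Fin n) ℝ) : Set ((Fin n ⊕ Fin n) → ℝ) :=
  {z | A.mulVec (z ∘ Sum.inl) ⬝ᵥ (z ∘ Sum.inl) ≤ hbar ∧
       A⁻¹.mulVec (z ∘ Sum.inr) ⬝ᵥ (z ∘ Sum.inr) ≤ hbar}

/-- The ellipsoid `Ω_A = {(x,p) : ⟨Ax,x⟩ + ⟨A⁻¹p,p⟩ ≤ ħ}`. -/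
def OmegaA (n : ℕ) (hbar : ℝ) (A : Matrix (Fin n) (Fin n) ℝ) : Set ((Fin n ⊕ Fin n) → ℝ) :=
  {z | A.mulVec (z ∘ Sum.inl) ⬝ᵥ (z ∘ Sum.inl) + A⁻¹.mulVec (z ∘ Sum.inr) ⬝ᵥ (z ∘ Sum.inr) ≤ hbar}

section
open scoped ComplexOrder

/-- The positive semidefinite square root of a positive semidefinite matrix (as defined in
Mathlib of December 2024; removed from current Mathlib). -/
noncomputable def Matrix.PosSemidef.sqrt {n 𝕜 : Type*} [Fintype n] [RCLike 𝕜] [DecidableEq n]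
    {A : Matrix n n 𝕜} (hA : A.PosSemidef) : Matrix n n 𝕜 :=
  hA.1.eigenvectorUnitary.1 * diagonal ((↑) ∘ (√·) ∘ hA.1.eigenvalues) *
  (star hA.1.eigenvectorUnitary : Matrix n n 𝕜)

end

/-- The symplectic matrix `S_A = [[A^{−1/2}, 0],[0, A^{1/2}]]`. -/
noncomputable def SA {n : ℕ} (A : Matrix (Fin n) (Fin n) ℝ) (hA : A.PosDef) :
    Matrix (Fin n ⊕ Fin n) (Fin n ⊕ Fin n) ℝ :=
  Matrix.fromBlocks (hA.posSemidef.sqrt)⁻¹ 0 0 hA.posSemidef.sqrt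

/-!
Write `T₁, T₂` for the position and momentum rows of `S`. The inclusion
`S(B²ⁿ(√ħ)) ⊆ X × X^ħ` says `T₁ᵀ A T₁ ≤ 1` and `T₂ᵀ A⁻¹ T₂ ≤ 1` in the Loewner order. The first
gives `T₁ T₁ᵀ ≤ A⁻¹`; symplecticity makes `J T₁ᵀ` a right inverse of `T₂` with Gram matrix
`T₁ T₁ᵀ`, so the second gives `A⁻¹ ≤ T₁ T₁ᵀ`. Symmetrically `T₂ T₂ᵀ = A`, so
`S Sᵀ = [[A⁻¹, Q], [Qᵀ, A]]`. As `S Sᵀ` is symplectic too, `Q² = 0` and `Q A⁻¹` is symmetric,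
which forces `Q = 0`. Thus `S Sᵀ = S_A S_Aᵀ`, and the ellipsoid `S(B²ⁿ(√ħ))` only depends on `S Sᵀ`.
-/

open scoped ComplexOrder MatrixOrder

section Sqrt

variable {k 𝕜 : Type*} [Fintype k] [DecidableEq k] [RCLike 𝕜] {A : Matrix k k 𝕜}

lemma Matrix.PosSemidef.isHermitian_sqrt (hA : A.PosSemidef) : hA.sqrt.IsHermitian := by
  have hD : (diagonal ((↑) ∘ (√·) ∘ hA.1.eigenvalues : k → 𝕜)).PosSemidef :=
    posSemidef_diagonal_iff.mpr fun i => RCLike.ofReal_nonneg.mpr (Real.sqrt_nonneg _)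
  exact (hD.mul_mul_conjTranspose_same (hA.1.eigenvectorUnitary : Matrix k k 𝕜)).isHermitian

lemma Matrix.PosSemidef.sqrt_mul_self (hA : A.PosSemidef) : hA.sqrt * hA.sqrt = A := by
  let U : Matrix k k 𝕜 := hA.1.eigenvectorUnitary
  let E := diagonal ((↑) ∘ (√·) ∘ hA.1.eigenvalues : k → 𝕜)
  have hEE : E * E = diagonal ((↑) ∘ hA.1.eigenvalues) := by
    rw [diagonal_mul_diagonal]
    congr! with i
    simp [← RCLike.ofReal_mul, Real.mul_self_sqrt (hA.eigenvalues_nonneg i)]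
  have hUU : star U * U = 1 := Unitary.star_mul_self_of_mem hA.1.eigenvectorUnitary.2
  have hs := hA.1.spectral_theorem
  rw [Unitary.conjStarAlgAut_apply] at hs
  calc hA.sqrt * hA.sqrt = U * (E * (star U * U) * E) * star U := by
        simp only [Matrix.PosSemidef.sqrt, U, E, Matrix.mul_assoc]
    _ = A := by rw [hUU, Matrix.mul_one, hEE]; exact hs.symm

end Sqrt

lemma Matrix.IsHermitian.transpose_eq {m : Type*} {A : Matrix m m ℝ} (hA : A.IsHermitian) :
    Aᵀ = A := by
  rw [← conjTranspose_eq_transpose_of_trivial]; exact hA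

lemma Matrix.PosSemidef.mulVec_dotProduct_self_nonneg {m : Type*} [Fintype m] {A : Matrix m m ℝ}
    (hA : A.PosSemidef) (x : m → ℝ) : 0 ≤ (A *ᵥ x) ⬝ᵥ x := by
  simpa [dotProduct_comm] using hA.dotProduct_mulVec_nonneg x

lemma Matrix.PosDef.isUnit_det_sqrt {k : Type*} [Fintype k] [DecidableEq k] {A : Matrix k k ℝ}
    (hA : A.PosDef) : IsUnit hA.posSemidef.sqrt.det :=
  isUnit_of_mul_isUnit_left <| by
    rw [← det_mul, hA.posSemidef.sqrt_mul_self]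
    exact hA.det_pos.ne'.isUnit

lemma Matrix.PosDef.eq_zero_of_mul_mul_conjTranspose_eq_zero {k m 𝕜 : Type*} [Fintype k]
    [Fintype m] [RCLike 𝕜] {P : Matrix m m 𝕜} (hP : P.PosDef) {B : Matrix k m 𝕜}
    (h : B * P * Bᴴ = 0) : B = 0 := by
  rw [← conjTranspose_eq_zero, ext_iff_mulVec]
  intro v
  rw [zero_mulVec]
  by_contra hv
  have := hP.dotProduct_mulVec_pos hv
  rw [star_mulVec, conjTranspose_conjTranspose, ← dotProduct_mulVec, mulVec_mulVec,
    mulVec_mulVec, h] at this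
  simp at this

section LoewnerOrder

variable {k m : Type*} [Fintype k] [Fintype m] [DecidableEq k]

lemma Matrix.transpose_mul_mul_le_one {h : ℝ} (hh : 0 < h) {A : Matrix m m ℝ}
    (hA : A.IsHermitian) {T : Matrix m k ℝ}
    (hT : ∀ w, w ⬝ᵥ w ≤ h → (A *ᵥ (T *ᵥ w)) ⬝ᵥ (T *ᵥ w) ≤ h) : Tᵀ * A * T ≤ 1 := by
  have hq : ∀ w, (A *ᵥ (T *ᵥ w)) ⬝ᵥ (T *ᵥ w) ≤ w ⬝ᵥ w := by
    intro w
    rcases eq_or_ne w 0 with rfl | hw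
    · simp
    have hww : 0 < w ⬝ᵥ w := by simpa using dotProduct_star_self_pos_iff.mpr hw
    set t := √(h / (w ⬝ᵥ w))
    have ht : t ^ 2 * (w ⬝ᵥ w) = h := by
      rw [Real.sq_sqrt (div_pos hh hww).le, div_mul_cancel₀ _ hww.ne']
    have hball : (t • w) ⬝ᵥ (t • w) = h := by
      rw [← ht, smul_dotProduct, dotProduct_smul, smul_eq_mul, smul_eq_mul, ← mul_assoc, sq]
    have := hT (t • w) hball.le
    rw [mulVec_smul, mulVec_smul, smul_dotProduct, dotProduct_smul, smul_eq_mul, smul_eq_mul,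
      ← mul_assoc, ← sq, ← ht] at this
    exact le_of_mul_le_mul_left this (by positivity)
  refine PosSemidef.of_dotProduct_mulVec_nonneg ?_ fun w => ?_
  · exact isHermitian_one.sub (isHermitian_conjTranspose_mul_mul T hA)
  · have : w ⬝ᵥ (Tᵀ *ᵥ (A *ᵥ (T *ᵥ w))) = (A *ᵥ (T *ᵥ w)) ⬝ᵥ (T *ᵥ w) := by
      rw [dotProduct_mulVec, vecMul_transpose, dotProduct_comm]
    simpa [sub_mulVec, ← mulVec_mulVec, this] using hq w

lemma Matrix.mul_transpose_le_inv [DecidableEq m] {A : Matrix m m ℝ} (hA : A.PosDef)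
    {T : Matrix m k ℝ} (hT : Tᵀ * A * T ≤ 1) : T * Tᵀ ≤ A⁻¹ := by
  have hdet : IsUnit A.det := hA.det_pos.ne'.isUnit
  set C := T * Tᵀ - A⁻¹
  have hC : Cᴴ = C := by
    rw [conjTranspose_eq_transpose_of_trivial]
    simp [C, transpose_nonsing_inv, hA.isHermitian.transpose_eq]
  have key : A⁻¹ - T * Tᵀ = T * (1 - Tᵀ * A * T) * Tᴴ + Cᴴ * A * C := by
    rw [hC, conjTranspose_eq_transpose_of_trivial]
    simp only [C, Matrix.mul_sub, Matrix.sub_mul, Matrix.mul_assoc, Matrix.mul_one,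
      mul_nonsing_inv _ hdet, nonsing_inv_mul_cancel_left _ _ hdet]
    abel
  rw [le_iff, key]
  exact ((le_iff.mp hT).mul_mul_conjTranspose_same T).add
    (hA.posSemidef.conjTranspose_mul_mul_same C)

lemma Matrix.le_transpose_mul_of_mul_eq_one [DecidableEq m] {A : Matrix m m ℝ} {T : Matrix m k ℝ}
    {R : Matrix k m ℝ} (hTR : T * R = 1) (hT : Tᵀ * A * T ≤ 1) : A ≤ Rᵀ * R := by
  have key : Rᴴ * (1 - Tᵀ * A * T) * R = Rᵀ * R - A := by
    rw [conjTranspose_eq_transpose_of_trivial, Matrix.mul_sub, Matrix.sub_mul, Matrix.mul_one]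
    congr 1
    calc Rᵀ * (Tᵀ * A * T) * R = (T * R)ᵀ * A * (T * R) := by
          simp only [transpose_mul, Matrix.mul_assoc]
      _ = A := by rw [hTR]; simp
  rw [le_iff, ← key]
  exact (le_iff.mp hT).conjTranspose_mul_mul_same R

end LoewnerOrder

namespace SymplecticGroup

variable {l R : Type*} [Fintype l] [DecidableEq l] [CommRing R]

lemma transpose_J_mul_mul_J_mul (M : Matrix (l ⊕ l) l R) :
    (J l R * M)ᵀ * (J l R * M) = Mᵀ * M := by
  rw [transpose_mul, J_transpose, Matrix.mul_assoc, ← Matrix.mul_assoc (-J l R), Matrix.neg_mul,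
    J_squared, neg_neg, Matrix.one_mul]

lemma toRows_mul_J_mul_transpose {S : Matrix (l ⊕ l) (l ⊕ l) R} (hS : S ∈ symplecticGroup l R) :
    S.toRows₁ * (J l R * S.toRows₂ᵀ) = -1 ∧ S.toRows₂ * (J l R * S.toRows₁ᵀ) = 1 := by
  have h := mem_iff.mp hS
  rw [← fromRows_toRows S, transpose_fromRows, fromRows_mul, fromRows_mul_fromCols, J,
    fromBlocks_inj] at h
  simp only [Matrix.mul_assoc] at h
  exact ⟨h.2.1, h.2.2.1⟩

lemma eq_zero_of_fromBlocks_inv_mem {A Q : Matrix l l ℝ} (hA : A.PosDef)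
    (h : fromBlocks A⁻¹ Q Qᵀ A ∈ symplecticGroup l ℝ) : Q = 0 := by
  obtain ⟨hsymm, -, hone⟩ := fromBlocks_mem_iff.mp h
  have hdet : IsUnit A.det := hA.det_pos.ne'.isUnit
  rw [transpose_transpose, transpose_nonsing_inv, hA.isHermitian.transpose_eq] at hsymm
  rw [transpose_transpose, transpose_nonsing_inv, hA.isHermitian.transpose_eq,
    nonsing_inv_mul _ hdet, sub_eq_self] at hone
  refine hA.inv.eq_zero_of_mul_mul_conjTranspose_eq_zero ?_
  rw [conjTranspose_eq_transpose_of_trivial, Matrix.mul_assoc, hsymm, ← Matrix.mul_assoc, hone,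
    Matrix.zero_mul]

end SymplecticGroup

lemma Matrix.image_mulVec_setOf_dotProduct_self_le {k : Type*} [Fintype k] [DecidableEq k]
    {S D : Matrix k k ℝ} (hD : Sᵀ * D * S = 1) (h : ℝ) :
    S.mulVec '' {w | w ⬝ᵥ w ≤ h} = {z | (D *ᵥ z) ⬝ᵥ z ≤ h} := by
  have hdet : IsUnit S.det := isUnit_det_of_left_inverse hD
  have hq : ∀ w, (D *ᵥ (S *ᵥ w)) ⬝ᵥ (S *ᵥ w) = w ⬝ᵥ w := by
    intro w
    have h_conj : ((Sᵀ * D * S) *ᵥ w) ⬝ᵥ w = (D *ᵥ (S *ᵥ w)) ⬝ᵥ (S *ᵥ w) := by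
      rw [← mulVec_mulVec, ← mulVec_mulVec, dotProduct_comm, dotProduct_mulVec, vecMul_transpose,
        dotProduct_comm]
    rw [← h_conj, hD, one_mulVec]
  ext z
  constructor
  · rintro ⟨w, hw, rfl⟩
    exact (hq w).trans_le hw
  · intro (hz : _ ≤ h)
    have hSz : S *ᵥ (S⁻¹ *ᵥ z) = z := by rw [mulVec_mulVec, mul_nonsing_inv _ hdet, one_mulVec]
    refine ⟨S⁻¹ *ᵥ z, ?_, hSz⟩
    show _ ≤ h
    rwa [← hq, hSz]

section PhaseSpace

variable {n : ℕ} {hbar : ℝ} {A : Matrix (Fin n) (Fin n) ℝ}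

lemma isSymplectic_iff_mem_symplecticGroup {S : Matrix (Fin n ⊕ Fin n) (Fin n ⊕ Fin n) ℝ} :
    IsSymplectic S ↔ S ∈ symplecticGroup (Fin n) ℝ := by
  have hJ : Jmat n = -J (Fin n) ℝ := by simp [Jmat, J, fromBlocks_neg]
  rw [SymplecticGroup.mem_iff', IsSymplectic, hJ, Matrix.mul_neg, Matrix.neg_mul, neg_inj]

lemma OmegaA_eq_setOf : OmegaA n hbar A = {z | (fromBlocks A 0 0 A⁻¹ *ᵥ z) ⬝ᵥ z ≤ hbar} := by
  ext z
  simp [OmegaA, fromBlocks_mulVec, dotProduct, Fintype.sum_sum_type]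

lemma OmegaA_subset_prodXXh (hA : A.PosDef) : OmegaA n hbar A ⊆ prodXXh n hbar A := by
  intro z (hz : _ + _ ≤ hbar)
  have h₁ := hA.posSemidef.mulVec_dotProduct_self_nonneg (z ∘ Sum.inl)
  have h₂ := hA.inv.posSemidef.mulVec_dotProduct_self_nonneg (z ∘ Sum.inr)
  exact ⟨by linarith, by linarith⟩

lemma image_inl_OmegaA (hA : A.PosDef) :
    (fun z : (Fin n ⊕ Fin n) → ℝ => z ∘ Sum.inl) '' OmegaA n hbar A
      = {x : Fin n → ℝ | A.mulVec x ⬝ᵥ x ≤ hbar} := by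
  ext x
  constructor
  · rintro ⟨z, hz, rfl⟩
    exact (OmegaA_subset_prodXXh hA hz).1
  · intro (hx : _ ≤ hbar)
    exact ⟨Sum.elim x (0 : Fin n → ℝ), by simpa [OmegaA] using hx, Sum.elim_comp_inl x _⟩

lemma image_inr_OmegaA (hA : A.PosDef) :
    (fun z : (Fin n ⊕ Fin n) → ℝ => z ∘ Sum.inr) '' OmegaA n hbar A
      = {p : Fin n → ℝ | A⁻¹.mulVec p ⬝ᵥ p ≤ hbar} := by
  ext p
  constructor
  · rintro ⟨z, hz, rfl⟩
    exact (OmegaA_subset_prodXXh hA hz).2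
  · intro (hp : _ ≤ hbar)
    exact ⟨Sum.elim (0 : Fin n → ℝ) p, by simpa [OmegaA] using hp, Sum.elim_comp_inr _ p⟩

lemma image_ballh_eq_OmegaA (hA : A.PosDef) {S : Matrix (Fin n ⊕ Fin n) (Fin n ⊕ Fin n) ℝ}
    (hS : S * Sᵀ = fromBlocks A⁻¹ 0 0 A) : S.mulVec '' ballh n hbar = OmegaA n hbar A := by
  have hdet : IsUnit A.det := hA.det_pos.ne'.isUnit
  have h : S * (Sᵀ * fromBlocks A 0 0 A⁻¹) = 1 := by
    rw [← Matrix.mul_assoc, hS, fromBlocks_multiply]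
    simp [nonsing_inv_mul _ hdet, mul_nonsing_inv _ hdet, fromBlocks_one]
  rw [OmegaA_eq_setOf]
  exact image_mulVec_setOf_dotProduct_self_le (mul_eq_one_comm.mp h) hbar

lemma SA_mul_transpose (hA : A.PosDef) : SA A hA * (SA A hA)ᵀ = fromBlocks A⁻¹ 0 0 A := by
  have hB := hA.posSemidef.isHermitian_sqrt.transpose_eq
  simp [SA, fromBlocks_transpose, fromBlocks_multiply, transpose_nonsing_inv, hB,
    ← Matrix.mul_inv_rev, hA.posSemidef.sqrt_mul_self]

lemma isSymplectic_SA (hA : A.PosDef) : IsSymplectic (SA A hA) := by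
  have hB := hA.posSemidef.isHermitian_sqrt.transpose_eq
  rw [isSymplectic_iff_mem_symplecticGroup, SA, SymplecticGroup.fromBlocks_mem_iff]
  simp [transpose_nonsing_inv, hB, nonsing_inv_mul _ hA.isUnit_det_sqrt]

lemma mul_transpose_eq_of_image_ballh_subset (hbar_pos : 0 < hbar) (hA : A.PosDef)
    {S : Matrix (Fin n ⊕ Fin n) (Fin n ⊕ Fin n) ℝ} (hS : S ∈ symplecticGroup (Fin n) ℝ)
    (hsub : S.mulVec '' ballh n hbar ⊆ prodXXh n hbar A) :
    S * Sᵀ = fromBlocks A⁻¹ 0 0 A := by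
  set T₁ := S.toRows₁
  set T₂ := S.toRows₂
  have h₁ : T₁ᵀ * A * T₁ ≤ 1 :=
    transpose_mul_mul_le_one hbar_pos hA.isHermitian fun w hw => (hsub ⟨w, hw, rfl⟩).1
  have h₂ : T₂ᵀ * A⁻¹ * T₂ ≤ 1 :=
    transpose_mul_mul_le_one hbar_pos hA.inv.isHermitian fun w hw => (hsub ⟨w, hw, rfl⟩).2
  obtain ⟨hJ₁₂, hJ₂₁⟩ := SymplecticGroup.toRows_mul_J_mul_transpose hS
  have hT₁ : T₁ * T₁ᵀ = A⁻¹ := by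
    refine le_antisymm (mul_transpose_le_inv hA h₁) ?_
    have := le_transpose_mul_of_mul_eq_one hJ₂₁ h₂
    rwa [SymplecticGroup.transpose_J_mul_mul_J_mul, transpose_transpose] at this
  have hT₂ : T₂ * T₂ᵀ = A := by
    refine le_antisymm ?_ ?_
    · simpa [nonsing_inv_nonsing_inv _ hA.det_pos.ne'.isUnit] using
        mul_transpose_le_inv hA.inv h₂
    · have hR : T₁ * (J (Fin n) ℝ * -T₂ᵀ) = 1 := by
        rw [Matrix.mul_neg, Matrix.mul_neg, hJ₁₂, neg_neg]
      have := le_transpose_mul_of_mul_eq_one hR h₁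
      rwa [SymplecticGroup.transpose_J_mul_mul_J_mul, transpose_neg, Matrix.neg_mul,
        Matrix.mul_neg, neg_neg, transpose_transpose] at this
  have hblocks : S * Sᵀ = fromBlocks A⁻¹ (T₁ * T₂ᵀ) (T₁ * T₂ᵀ)ᵀ A := by
    rw [← fromRows_toRows S, transpose_fromRows, fromRows_mul_fromCols, ← hT₁, ← hT₂,
      transpose_mul, transpose_transpose]
  have hQ := SymplecticGroup.eq_zero_of_fromBlocks_inv_mem hA
    (hblocks ▸ mul_mem hS (SymplecticGroup.transpose_mem hS))
  rw [hblocks, hQ, transpose_zero]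

end PhaseSpace

/-- the product `X × X^ħ` of the ellipsoid `X = {x : ⟨Ax,x⟩ ≤ ħ}` with its
quantum polar dual contains exactly one quantum blob, namely
`Ω_A = {(x,p) : ⟨Ax,x⟩ + ⟨A⁻¹p,p⟩ ≤ ħ} = S_A(B²ⁿ(√ħ))`; moreover the orthogonal
projections of `Ω_A` onto the two factors `ℝⁿ` are exactly `X` and `X^ħ`. -/
theorem statement10 (n : ℕ) (hbar : ℝ) (hhbar : 0 < hbar)
    (A : Matrix (Fin n) (Fin n) ℝ) (hA : A.PosDef) :
    IsSymplectic (SA A hA) ∧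
    OmegaA n hbar A = (SA A hA).mulVec '' ballh n hbar ∧
    OmegaA n hbar A ⊆ prodXXh n hbar A ∧
    (∀ S : Matrix (Fin n ⊕ Fin n) (Fin n ⊕ Fin n) ℝ, IsSymplectic S →
      S.mulVec '' ballh n hbar ⊆ prodXXh n hbar A →
      S.mulVec '' ballh n hbar = OmegaA n hbar A) ∧
    (fun z : (Fin n ⊕ Fin n) → ℝ => z ∘ Sum.inl) '' OmegaA n hbar A
      = {x : Fin n → ℝ | A.mulVec x ⬝ᵥ x ≤ hbar} ∧
    (fun z : (Fin n ⊕ Fin n) → ℝ => z ∘ Sum.inr) '' OmegaA n hbar A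
      = {p : Fin n → ℝ | A⁻¹.mulVec p ⬝ᵥ p ≤ hbar} :=
  ⟨isSymplectic_SA hA, (image_ballh_eq_OmegaA hA (SA_mul_transpose hA)).symm,
    OmegaA_subset_prodXXh hA,
    fun _ hS hsub => image_ballh_eq_OmegaA hA <| mul_transpose_eq_of_image_ballh_subset hhbar hA
      (isSymplectic_iff_mem_symplecticGroup.mp hS) hsub,
    image_inl_OmegaA hA, image_inr_OmegaA hA⟩
end

section
/- Let W and Y be real symmetric n×n matrices with W positive definite. Then the complex matrix W + iY is invertible and (W + iY)⁻¹ = (W + Y W⁻¹ Y)⁻¹ − i W⁻¹ Y (W + Y W⁻¹ Y)⁻¹. -/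
open Matrix

/-!
Multiplying out `(W + iY)(A - iB)` with real `A, B` separates real and imaginary parts:
`(WA + YB) + i(YA - WB)`. With `M = W + Y W⁻¹ Y`, `A = M⁻¹` and `B = W⁻¹ Y M⁻¹` the imaginary
part cancels and the real part is `M M⁻¹ = 1`. `M` is invertible because `Y W⁻¹ Y = Y W⁻¹ Yᵀ` is
positive semidefinite, so `M` is positive definite.
-/

namespace Matrix

variable {ι : Type*} [Fintype ι] [DecidableEq ι]

theorem map_ofReal_add_I_smul_mul_sub_I_smul (A B C D : Matrix ι ι ℝ) :
    (A.map Complex.ofReal + Complex.I • B.map Complex.ofReal) *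
        (C.map Complex.ofReal - Complex.I • D.map Complex.ofReal) =
      (A * C + B * D).map Complex.ofReal + Complex.I • (B * C - A * D).map Complex.ofReal := by
  let φ : Matrix ι ι ℝ →+* Matrix ι ι ℂ := Complex.ofRealHom.mapMatrix
  change (φ A + Complex.I • φ B) * (φ C - Complex.I • φ D) =
    φ (A * C + B * D) + Complex.I • φ (B * C - A * D)
  simp only [map_add, map_sub, map_mul, add_mul, mul_sub, Matrix.smul_mul, Matrix.mul_smul,
    smul_smul, Complex.I_mul_I, neg_one_smul, smul_sub]
  abel

theorem PosDef.add_mul_inv_mul_self {K : Type*} [Field K] [PartialOrder K] [StarRing K]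
    [AddLeftMono K] {W Y : Matrix ι ι K}
    (hW : W.PosDef) (hY : Y.IsHermitian) : (W + Y * W⁻¹ * Y).PosDef := by
  have h := hW.inv.posSemidef.mul_mul_conjTranspose_same Y
  rw [hY.eq] at h
  exact hW.add_posSemidef h

theorem mul_inv_add_mul_inv_mul_mul_inv_eq_one {α : Type*} [CommRing α] {W Y : Matrix ι ι α}
    (hM : IsUnit (W + Y * W⁻¹ * Y).det) :
    W * (W + Y * W⁻¹ * Y)⁻¹ + Y * (W⁻¹ * Y * (W + Y * W⁻¹ * Y)⁻¹) = 1 := by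
  calc _ = (W + Y * W⁻¹ * Y) * (W + Y * W⁻¹ * Y)⁻¹ := by noncomm_ring
    _ = 1 := mul_nonsing_inv _ hM

theorem mul_sub_mul_inv_mul_mul_eq_zero {α : Type*} [CommRing α] {W : Matrix ι ι α}
    (hW : IsUnit W.det) (Y A : Matrix ι ι α) : Y * A - W * (W⁻¹ * Y * A) = 0 := by
  rw [← Matrix.mul_assoc, ← Matrix.mul_assoc, mul_nonsing_inv _ hW, Matrix.one_mul, sub_self]

end Matrix

/-- for real symmetric matrices `W` (positive definite) and `Y`, the complex
matrix `W + iY` is invertible and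
`(W + iY)⁻¹ = (W + Y W⁻¹ Y)⁻¹ − i W⁻¹ Y (W + Y W⁻¹ Y)⁻¹`. -/
theorem statement13 (n : ℕ) (W Y : Matrix (Fin n) (Fin n) ℝ)
    (hW : W.PosDef) (hY : Y.IsSymm) :
    IsUnit (W.map Complex.ofReal + Complex.I • Y.map Complex.ofReal) ∧
    (W.map Complex.ofReal + Complex.I • Y.map Complex.ofReal)⁻¹
      = ((W + Y * W⁻¹ * Y)⁻¹).map Complex.ofReal
          - Complex.I • (W⁻¹ * Y * (W + Y * W⁻¹ * Y)⁻¹).map Complex.ofReal := by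
  have hYh : Y.IsHermitian := by
    rw [IsHermitian, conjTranspose_eq_transpose_of_trivial]
    exact hY
  have hWdet : IsUnit W.det := (isUnit_iff_isUnit_det W).mp hW.isUnit
  have hMdet : IsUnit (W + Y * W⁻¹ * Y).det :=
    (isUnit_iff_isUnit_det _).mp (hW.add_mul_inv_mul_self hYh).isUnit
  have hright_inv : (W.map Complex.ofReal + Complex.I • Y.map Complex.ofReal) *
      (((W + Y * W⁻¹ * Y)⁻¹).map Complex.ofReal
        - Complex.I • (W⁻¹ * Y * (W + Y * W⁻¹ * Y)⁻¹).map Complex.ofReal) = 1 := by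
    rw [map_ofReal_add_I_smul_mul_sub_I_smul, mul_inv_add_mul_inv_mul_mul_inv_eq_one hMdet,
      mul_sub_mul_inv_mul_mul_eq_zero hWdet, Matrix.map_zero _ Complex.ofReal_zero, smul_zero,
      add_zero, Matrix.map_one _ Complex.ofReal_zero Complex.ofReal_one]
  exact ⟨(isUnit_iff_isUnit_det _).mpr (isUnit_det_of_right_inverse hright_inv),
    inv_eq_right_inv hright_inv⟩
end

section
/- Let Σ be a real symmetric 2n×2n matrix satisfying the quantum condition Σ + (iħ/2)J ⪰ 0. Writing coordinates z = (x₁,…,xₙ,p₁,…,pₙ) and denoting σ_{x_j x_j} = Σ_{j,j}, σ_{p_j p_j} = Σ_{n+j,n+j}, σ_{x_j p_j} = Σ_{j,n+j}, the Robertson–Schrödinger inequalities hold: σ_{x_j x_j} σ_{p_j p_j} ≥ σ_{x_j p_j}² + ħ²/4 for every j = 1, …, n. -/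
/-!
The inequality for the pair `(x_j, p_j)` is the nonnegativity of the `2 × 2` principal minor of
`Σ + (iħ/2)J` on these two coordinates: its diagonal entries are `σ_{x_j x_j}` and `σ_{p_j p_j}`,
and its off-diagonal entry `σ_{x_j p_j} + iħ/2` has squared modulus `σ_{x_j p_j}² + ħ²/4`.
-/

open Matrix ComplexOrder

theorem Matrix.PosSemidef.norm_apply_sq_le {𝕜 ι : Type*} [RCLike 𝕜] [Fintype ι]
    {A : Matrix ι ι 𝕜} (hA : A.PosSemidef) (i k : ι) :
    ‖A i k‖ ^ 2 ≤ RCLike.re (A i i) * RCLike.re (A k k) := by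
  have hdet := (hA.submatrix ![i, k]).det_nonneg
  have hki : A k i = star (A i k) := (hA.isHermitian.apply k i).symm
  have him : RCLike.im (A i i) = 0 := (RCLike.nonneg_iff.1 hA.diag_nonneg).2
  rw [det_fin_two, RCLike.nonneg_iff] at hdet
  simp only [submatrix_apply, cons_val_zero, cons_val_one, hki, RCLike.star_def,
    RCLike.mul_conj, map_sub, RCLike.mul_re, him, zero_mul, sub_zero, ← RCLike.ofReal_pow,
    RCLike.ofReal_re, sub_nonneg] at hdet
  exact hdet.1

noncomputable def quantumMatrix {n : ℕ} (hbar : ℝ)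
    (Cov : Matrix (Fin n ⊕ Fin n) (Fin n ⊕ Fin n) ℝ) :
    Matrix (Fin n ⊕ Fin n) (Fin n ⊕ Fin n) ℂ :=
  Cov.map Complex.ofReal + (Complex.I * (hbar / 2)) • (Jmat n).map Complex.ofReal

section quantumMatrix

variable {n : ℕ} (hbar : ℝ) (Cov : Matrix (Fin n ⊕ Fin n) (Fin n ⊕ Fin n) ℝ) (j : Fin n)

theorem quantumMatrix_apply_inl_inl :
    quantumMatrix hbar Cov (Sum.inl j) (Sum.inl j) = Cov (Sum.inl j) (Sum.inl j) := by
  simp [quantumMatrix, Jmat]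

theorem quantumMatrix_apply_inr_inr :
    quantumMatrix hbar Cov (Sum.inr j) (Sum.inr j) = Cov (Sum.inr j) (Sum.inr j) := by
  simp [quantumMatrix, Jmat]

theorem quantumMatrix_apply_inl_inr :
    quantumMatrix hbar Cov (Sum.inl j) (Sum.inr j) = ⟨Cov (Sum.inl j) (Sum.inr j), hbar / 2⟩ := by
  simp [quantumMatrix, Jmat, Complex.ext_iff]

end quantumMatrix

theorem statement15_general (n : ℕ) (hbar : ℝ)
    (Cov : Matrix (Fin n ⊕ Fin n) (Fin n ⊕ Fin n) ℝ)
    (hquant : (Cov.map Complex.ofReal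
        + (Complex.I * (hbar / 2)) • (Jmat n).map Complex.ofReal).PosSemidef) :
    ∀ j : Fin n,
      Cov (Sum.inl j) (Sum.inr j) ^ 2 + hbar ^ 2 / 4
        ≤ Cov (Sum.inl j) (Sum.inl j) * Cov (Sum.inr j) (Sum.inr j) := by
  intro j
  have hM : (quantumMatrix hbar Cov).PosSemidef := hquant
  have h := hM.norm_apply_sq_le (Sum.inl j) (Sum.inr j)
  rw [quantumMatrix_apply_inl_inl, quantumMatrix_apply_inr_inr, quantumMatrix_apply_inl_inr,
    Complex.sq_norm, Complex.normSq_mk] at h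
  simp only [RCLike.re_to_complex, Complex.ofReal_re] at h
  linarith

/-- if the real symmetric matrix `Σ` satisfies the quantum condition
`Σ + (iħ/2)J ⪰ 0`, then the Robertson–Schrödinger inequalities
`σ_{x_j x_j} σ_{p_j p_j} ≥ σ_{x_j p_j}² + ħ²/4` hold for all `j`. -/
theorem statement15 (n : ℕ) (hbar : ℝ) (hhbar : 0 < hbar)
    (Cov : Matrix (Fin n ⊕ Fin n) (Fin n ⊕ Fin n) ℝ) (hsymm : Cov.IsSymm)
    (hquant : (Cov.map Complex.ofReal
        + (Complex.I * (hbar / 2)) • (Jmat n).map Complex.ofReal).PosSemidef) :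
    ∀ j : Fin n,
      Cov (Sum.inl j) (Sum.inr j) ^ 2 + hbar ^ 2 / 4
        ≤ Cov (Sum.inl j) (Sum.inl j) * Cov (Sum.inr j) (Sum.inr j) :=
  statement15_general n hbar Cov hquant
end
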